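/- Let G be a locally compact group with left Haar measure μ, let A be a C*-algebra, H a complex Hilbert space, π : A → B(H) a *-homomorphism, and U : G → U(H) a strongly continuous unitary representation. Let a ∈ A, let f : G → ℂ be continuous with compact support, and let ξ₀ ∈ H. Set S = supp(f) ∪ {1}, and let K ⊆ G be compact with 0 < μ(K) < ∞. Let ξ ∈ L²(G, H; μ) be the function ξ(g) = ξ₀ if g ∈ S⁻¹ • K and ξ(g) = 0 otherwise. Suppose W ∈ B(L²(G, H; μ)) satisfies, for every η ∈ L²(G, H; μ): (W η)(g) = π(a)(∫_G f(h) · U_h(η(h⁻¹ g)) dμ(h)) for μ-a.e. g. Then: (i) ‖ξ‖_{L²} = μ(S⁻¹ • K)^{1/2} · ‖ξ₀‖; (ii) (W ξ)(g) = π(a)(U(f) ξ₀) for μ-a.e. g ∈ K, where U(f) ξ₀ = ∫_G f(g) · U_g ξ₀ dμ(g); and consequently (iii) ‖W ξ‖_{L²} ≥ μ(K)^{1/2} · ‖π(a)(U(f) ξ₀)‖. -/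

import Mathlib

open MeasureTheory Pointwise ENNReal

private lemma toReal_norm_mul_rpow_half {H : Type*} [NormedAddCommGroup H]
    (c : H) (m : ℝ≥0∞) :
    ((‖c‖₊ : ℝ≥0∞) * m ^ (1 / 2 : ℝ)).toReal = Real.sqrt m.toReal * ‖c‖ := by
  rw [ENNReal.toReal_mul, ENNReal.coe_toReal, coe_nnnorm, ← ENNReal.toReal_rpow,
    Real.sqrt_eq_rpow, mul_comm]

section InvNull

variable {G : Type*} [Group G] [TopologicalSpace G] [IsTopologicalGroup G]
    [LocallyCompactSpace G] [MeasurableSpace G] [BorelSpace G]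

/-- Comparison of an arbitrary Haar measure with the canonical one on sets with compact
closure: they have the same null sets there. -/
private lemma haar_null_iff (μ : Measure G) [μ.IsHaarMeasure] {s : Set G}
    (hs : IsCompact (closure s)) :
    μ s = 0 ↔ (MeasureTheory.Measure.haar : Measure G) s = 0 := by
  have h := Measure.measure_isMulInvariant_eq_smul_of_isCompact_closure μ
    MeasureTheory.Measure.haar hs
  have hc : Measure.haarScalarFactor μ (MeasureTheory.Measure.haar : Measure G) ≠ 0 :=
    (Measure.haarScalarFactor_pos_of_isHaarMeasure _ _).ne'
  rw [h, ENNReal.smul_def, smul_eq_mul, mul_eq_zero]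
  simp [hc]

/-- For the canonical (regular) Haar measure, null sets with compact closure have null
inverses.  This is proved by comparing the Haar measure with its inverse (a right Haar
measure) through `MeasureTheory.Measure.integral_isMulLeftInvariant_isMulRightInvariant_combo`. -/
private lemma haar_canonical_inv_null {s : Set G} (hs : IsCompact (closure s))
    (h0 : (MeasureTheory.Measure.haar : Measure G) s = 0) :
    (MeasureTheory.Measure.haar : Measure G) s⁻¹ = 0 := by
  set ν : Measure G := MeasureTheory.Measure.haar with hν
  set ν' : Measure G := ν.inv with hν'
  suffices hfin : ν' s = 0 by
    rw [hν', Measure.inv_apply] at hfin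
    exact hfin
  rcases Set.eq_empty_or_nonempty s with rfl | hne
  · simp
  obtain ⟨U₀, U₀open, hsU₀, hU₀cc⟩ := exists_isOpen_superset_and_isCompact_closure hs
  have hsU₀' : s ⊆ U₀ := subset_closure.trans hsU₀
  obtain ⟨g, g_comp, g_nonneg, g_one⟩ := exists_continuous_nonneg_pos (1 : G)
  set Ig : ℝ := ∫ x, g x ∂ν with hIg
  have Ig_pos : 0 < Ig :=
    g.continuous.integral_pos_of_hasCompactSupport_nonneg_nonzero g_comp g_nonneg g_one
  set D : G → ℝ := fun x => ∫ y, g (y⁻¹ * x) ∂ν' with hD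
  have D_cont : Continuous D := continuous_integral_apply_inv_mul g.continuous g_comp
  have D_pos : ∀ x, 0 < D x := by
    intro x
    refine Continuous.integral_pos_of_hasCompactSupport_nonneg_nonzero (x := x)
      (g.continuous.comp (continuous_inv.mul continuous_const)) ?_
      (fun y => g_nonneg (y⁻¹ * x)) (by simpa using g_one)
    exact g_comp.comp_homeomorph ((Homeomorph.inv G).trans (Homeomorph.mulRight x))
  have hU₀cne : (closure U₀).Nonempty := hne.mono (hsU₀'.trans subset_closure)
  obtain ⟨zmax, -, hzmax⟩ := hU₀cc.exists_isMaxOn hU₀cne D_cont.continuousOn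
  set M : ℝ := D zmax with hM
  have M_pos : 0 < M := D_pos _
  set c : ℝ≥0∞ := ENNReal.ofReal (M / Ig) with hc
  have hc0 : c ≠ 0 := (ENNReal.ofReal_pos.2 (div_pos M_pos Ig_pos)).ne'
  have hctop : c ≠ ∞ := ENNReal.ofReal_ne_top
  -- Core estimate : for open `V ⊆ U₀`, `ν' V ≤ c * ν V`.
  have core : ∀ V : Set G, IsOpen V → V ⊆ U₀ → ν' V ≤ c * ν V := by
    intro V hV hVU₀
    have hVfin : ν V < ∞ :=
      lt_of_le_of_lt (measure_mono (hVU₀.trans subset_closure)) hU₀cc.measure_lt_top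
    rw [hV.measure_eq_iSup_isCompact]
    refine iSup_le fun C => iSup_le fun hCV => iSup_le fun hCcomp => ?_
    -- replace `C` by its closure, still inside `V`
    have hCc : closure C ⊆ V :=
      hCcomp.closure_subset_measurableSet hV.measurableSet hCV
    have hCccomp : IsCompact (closure C) := hCcomp.closure
    have hCfin : ν' (closure C) < ∞ := hCccomp.measure_lt_top
    -- Urysohn function for `closure C ⊆ V`
    obtain ⟨f, hf1, hf0, hfc, hf01⟩ := exists_continuous_one_zero_of_isCompact hCccomp
      hV.isClosed_compl (Set.disjoint_left.mpr fun x hx hxc => hxc (hCc hx))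
    have f_nonneg : ∀ x, 0 ≤ f x := fun x => (hf01 x).1
    have f_int_ν : Integrable f ν := f.continuous.integrable_of_hasCompactSupport hfc
    have f_int_ν' : Integrable f ν' := f.continuous.integrable_of_hasCompactSupport hfc
    have f_supp : Function.support f ⊆ V := by
      intro y hy
      by_contra hyV
      exact hy (hf0 hyV)
    -- (I1) : (ν' (closure C)).toReal ≤ ∫ f dν'
    have I1 : (ν' (closure C)).toReal ≤ ∫ y, f y ∂ν' := by
      have hCm : MeasurableSet (closure C) := isClosed_closure.measurableSet
      have hind : Integrable ((closure C).indicator fun _ => (1 : ℝ)) ν' := by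
        refine (integrableOn_const hCfin.ne).integrable_indicator hCm
      have hle : ∫ y, (closure C).indicator (fun _ => (1 : ℝ)) y ∂ν' ≤ ∫ y, f y ∂ν' := by
        refine integral_mono hind f_int_ν' fun y => ?_
        by_cases hy : y ∈ closure C
        · have : f y = 1 := hf1 hy
          simp [Set.indicator_of_mem hy, this]
        · simp [Set.indicator_of_notMem hy, f_nonneg y]
      rwa [integral_indicator_const _ hCm, smul_eq_mul, mul_one] at hle
    -- (I2) : ∫ f dν' ≤ (M / Ig) * ∫ f dν
    have I2 : ∫ y, f y ∂ν' ≤ (M / Ig) * ∫ y, f y ∂ν := by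
      have combo := MeasureTheory.Measure.integral_isMulLeftInvariant_isMulRightInvariant_combo
        (μ := ν) (ν := ν') f.continuous hfc g.continuous g_comp g_nonneg g_one
      have hint2 : Integrable (fun y => f y * (D y)⁻¹) ν' := by
        refine Continuous.integrable_of_hasCompactSupport
          (f.continuous.mul (D_cont.inv₀ fun x => (D_pos x).ne')) ?_
        exact hfc.mul_right
      have hpoint : ∀ y, M⁻¹ * f y ≤ f y * (D y)⁻¹ := by
        intro y
        by_cases hfy : f y = 0
        · simp [hfy]
        · have hyV : y ∈ V := f_supp hfy
          have hDy : D y ≤ M := hzmax (subset_closure (hVU₀ hyV))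
          have hDinv : M⁻¹ ≤ (D y)⁻¹ := by
            exact inv_anti₀ (D_pos y) hDy
          calc M⁻¹ * f y ≤ (D y)⁻¹ * f y :=
                mul_le_mul_of_nonneg_right hDinv (f_nonneg y)
            _ = f y * (D y)⁻¹ := mul_comm _ _
      have h2 : M⁻¹ * ∫ y, f y ∂ν' ≤ ∫ y, f y * (D y)⁻¹ ∂ν' := by
        rw [← integral_const_mul]
        exact integral_mono (f_int_ν'.const_mul _) hint2 hpoint
      have h3 : M⁻¹ * (∫ y, f y ∂ν') * Ig ≤ ∫ y, f y ∂ν := by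
        rw [combo]
        exact mul_le_mul_of_nonneg_right h2 Ig_pos.le
      calc ∫ y, f y ∂ν' = (M / Ig) * (M⁻¹ * (∫ y, f y ∂ν') * Ig) := by
            field_simp
        _ ≤ (M / Ig) * ∫ y, f y ∂ν :=
            mul_le_mul_of_nonneg_left h3 (div_nonneg M_pos.le Ig_pos.le)
    -- (I3) : ∫ f dν ≤ (ν V).toReal
    have I3 : ∫ y, f y ∂ν ≤ (ν V).toReal := by
      have hind : Integrable (V.indicator fun _ => (1 : ℝ)) ν := by
        refine (integrableOn_const hVfin.ne).integrable_indicator hV.measurableSet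
      have hle : ∫ y, f y ∂ν ≤ ∫ y, V.indicator (fun _ => (1 : ℝ)) y ∂ν := by
        refine integral_mono f_int_ν hind fun y => ?_
        by_cases hy : y ∈ V
        · simpa [Set.indicator_of_mem hy] using (hf01 y).2
        · have : f y = 0 := hf0 hy
          simp [Set.indicator_of_notMem hy, this]
      rwa [integral_indicator_const _ hV.measurableSet, smul_eq_mul, mul_one] at hle
    -- combine
    have key : (ν' (closure C)).toReal ≤ (M / Ig) * (ν V).toReal := by
      calc (ν' (closure C)).toReal ≤ ∫ y, f y ∂ν' := I1
        _ ≤ (M / Ig) * ∫ y, f y ∂ν := I2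
        _ ≤ (M / Ig) * (ν V).toReal :=
            mul_le_mul_of_nonneg_left I3 (div_nonneg M_pos.le Ig_pos.le)
    calc ν' C ≤ ν' (closure C) := measure_mono subset_closure
      _ = ENNReal.ofReal ((ν' (closure C)).toReal) := (ENNReal.ofReal_toReal hCfin.ne).symm
      _ ≤ ENNReal.ofReal ((M / Ig) * (ν V).toReal) := ENNReal.ofReal_le_ofReal key
      _ = c * ENNReal.ofReal ((ν V).toReal) :=
          ENNReal.ofReal_mul (div_nonneg M_pos.le Ig_pos.le)
      _ = c * ν V := by rw [ENNReal.ofReal_toReal hVfin.ne]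
  -- conclude by outer regularity of the canonical Haar measure
  refine le_antisymm ?_ zero_le
  refine ENNReal.le_of_forall_pos_le_add fun ε hε _ => ?_
  rw [zero_add]
  have hεc : (0 : ℝ≥0∞) < (ε : ℝ≥0∞) / c :=
    ENNReal.div_pos (by exact_mod_cast hε.ne') hctop
  obtain ⟨U, hsU, hUo, hUlt⟩ := Set.exists_isOpen_lt_of_lt s ((ε : ℝ≥0∞) / c)
    (by rw [h0]; exact hεc)
  calc ν' s ≤ ν' (U ∩ U₀) := measure_mono (Set.subset_inter hsU hsU₀')
    _ ≤ c * ν (U ∩ U₀) := core _ (hUo.inter U₀open) Set.inter_subset_right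
    _ ≤ c * ((ε : ℝ≥0∞) / c) := by
        refine mul_le_mul_right ?_ c
        exact le_of_lt (lt_of_le_of_lt (measure_mono Set.inter_subset_left) hUlt)
    _ ≤ (ε : ℝ≥0∞) := ENNReal.mul_div_le

/-- Null sets with compact closure of a Haar measure have null inverses. -/
private lemma haar_cc_null_inv (μ : Measure G) [μ.IsHaarMeasure] {s : Set G}
    (hs : IsCompact (closure s)) (h0 : μ s = 0) : μ s⁻¹ = 0 := by
  have hs' : IsCompact (closure s⁻¹) := by
    refine IsCompact.of_isClosed_subset hs.inv isClosed_closure ?_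
    exact closure_minimal (Set.inv_subset_inv.2 subset_closure) isClosed_closure.inv
  exact (haar_null_iff μ hs').2
    (haar_canonical_inv_null hs ((haar_null_iff μ hs).1 h0))

end InvNull

/-- **Følner-set vector estimate.** For the operator `W = (1 ⊗ π)(a)(λ ⊗ U)(f)` on
`L²(G, H; μ)` and the indicator-type vector `ξ = ξ₀ · 1_{S⁻¹K}` with `S = supp f ∪ {1}`:
(i) `‖ξ‖ = μ(S⁻¹K)^{1/2}‖ξ₀‖`; (ii) `(Wξ)(g) = π(a)(U(f)ξ₀)` for a.e. `g ∈ K`;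
(iii) `‖Wξ‖ ≥ μ(K)^{1/2}‖π(a)(U(f)ξ₀)‖`. -/
theorem folner_vector_estimate
    {G A H : Type*} [Group G] [TopologicalSpace G] [IsTopologicalGroup G]
    [LocallyCompactSpace G] [MeasurableSpace G] [BorelSpace G]
    (μ : Measure G) [μ.IsHaarMeasure]
    [NonUnitalNormedRing A] [StarRing A] [CStarRing A] [NormedSpace ℂ A]
    [IsScalarTower ℂ A A] [SMulCommClass ℂ A A] [StarModule ℂ A] [CompleteSpace A]
    [NormedAddCommGroup H] [InnerProductSpace ℂ H] [CompleteSpace H]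
    (π : A →⋆ₙₐ[ℂ] (H →L[ℂ] H))
    (U : G →* unitary (H →L[ℂ] H))
    (hU : ∀ ζ : H, Continuous fun g => (U g : H →L[ℂ] H) ζ)
    (a : A) (f : G → ℂ) (hf : Continuous f) (hfc : HasCompactSupport f)
    (ξ₀ : H) (S : Set G) (hS : S = tsupport f ∪ {1})
    (K : Set G) (hK : IsCompact K) (hK0 : 0 < μ K) (hKfin : μ K < ∞)
    (ξ : Lp H 2 μ)
    (hξ : ∀ᵐ g ∂μ, ξ g = (S⁻¹ • K).indicator (fun _ => ξ₀) g)
    (W : Lp H 2 μ →L[ℂ] Lp H 2 μ)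
    (hW : ∀ η : Lp H 2 μ, ∀ᵐ g ∂μ,
      (W η) g = π a (∫ h, f h • (U h : H →L[ℂ] H) (η (h⁻¹ * g)) ∂μ)) :
    ‖ξ‖ = Real.sqrt (μ (S⁻¹ • K)).toReal * ‖ξ₀‖ ∧
    (∀ᵐ g ∂μ, g ∈ K → (W ξ) g = π a (∫ g', f g' • (U g' : H →L[ℂ] H) ξ₀ ∂μ)) ∧
    Real.sqrt (μ K).toReal * ‖π a (∫ g', f g' • (U g' : H →L[ℂ] H) ξ₀ ∂μ)‖ ≤ ‖W ξ‖ := by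
  set E := S⁻¹ • K with hE
  set ind : G → H := E.indicator (fun _ => ξ₀) with hind
  have hT : IsCompact (tsupport f) := hfc
  -- Part (i)
  have part1 : ‖ξ‖ = Real.sqrt (μ E).toReal * ‖ξ₀‖ := by
    by_cases h0 : ξ₀ = 0
    · subst h0
      rw [Lp.norm_def]
      have hz : (ξ : G → H) =ᵐ[μ] (fun _ => (0 : H)) := by
        filter_upwards [hξ] with x hx
        rw [hx, hind]
        simp
      rw [eLpNorm_congr_ae hz, eLpNorm_zero']
      simp
    · rw [Lp.norm_def, eLpNorm_congr_ae hξ]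
      -- `E` is null measurable since the indicator is a.e. strongly measurable
      have hw : StronglyMeasurable (ξ : G → H) := Lp.stronglyMeasurable ξ
      have hEw : E =ᵐ[μ] Function.support (ξ : G → H) := by
        rw [Filter.eventuallyEq_set]
        filter_upwards [hξ] with x hx
        constructor
        · intro hxE
          simp only [Function.mem_support, hx, hind, Set.indicator_of_mem hxE]
          exact h0
        · intro hxs
          by_contra hxE
          apply hxs
          rw [hx, hind, Set.indicator_of_notMem hxE]
      have hsupp : MeasurableSet (Function.support (ξ : G → H)) := by
        have hnorm : Measurable fun x => ‖(ξ : G → H) x‖ := hw.norm.measurable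
        have hset : Function.support (ξ : G → H)
            = (fun x => ‖(ξ : G → H) x‖) ⁻¹' ({0}ᶜ) := by
          ext x; simp [Function.mem_support]
        rw [hset]
        exact hnorm (measurableSet_singleton 0).compl
      have hEnull : NullMeasurableSet E μ :=
        hsupp.nullMeasurableSet.congr hEw.symm
      have htm : (toMeasurable μ E : Set G) =ᵐ[μ] E := hEnull.toMeasurable_ae_eq
      have hindeq : ind =ᵐ[μ] (toMeasurable μ E).indicator (fun _ => ξ₀) :=
        indicator_ae_eq_of_ae_eq_set htm.symm
      rw [eLpNorm_congr_ae hindeq,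
        eLpNorm_indicator_const (measurableSet_toMeasurable μ E) (by norm_num) (by norm_num),
        measure_toMeasurable]
      have h2 : (1 / (2 : ℝ≥0∞).toReal) = (1 / 2 : ℝ) := by norm_num
      rw [h2]
      exact toReal_norm_mul_rpow_half ξ₀ (μ E)
  -- Part (ii)
  have part2 : ∀ᵐ g ∂μ, g ∈ K →
      (W ξ) g = π a (∫ g', f g' • (U g' : H →L[ℂ] H) ξ₀ ∂μ) := by
    set T := tsupport f with hTdef
    set C₀ : Set G := T⁻¹ * K with hC₀
    have hC₀c : IsCompact C₀ := hT.inv.mul hK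
    set N : Set G := C₀ ∩ {x | ¬ (ξ : G → H) x = ind x} with hN
    have hN0 : μ N = 0 :=
      measure_mono_null Set.inter_subset_right hξ
    have hNcc : IsCompact (closure N) :=
      IsCompact.of_isClosed_subset hC₀c.closure isClosed_closure
        (closure_mono Set.inter_subset_left)
    have hNinv : μ N⁻¹ = 0 := haar_cc_null_inv μ hNcc hN0
    filter_upwards [hW ξ] with g hg1 hgK
    rw [hg1]
    congr 1
    -- the set of bad `h` is null
    have hBnull : μ {h | h ∈ T ∧ ¬ (ξ : G → H) (h⁻¹ * g) = ind (h⁻¹ * g)} = 0 := by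
      refine measure_mono_null (fun h hh => ?_) ((measure_preimage_mul μ g⁻¹ N⁻¹).trans hNinv)
      obtain ⟨hhT, hdiff⟩ := hh
      have h1 : h⁻¹ * g ∈ N :=
        ⟨Set.mul_mem_mul (Set.inv_mem_inv.2 hhT) hgK, hdiff⟩
      show g⁻¹ * h ∈ N⁻¹
      rw [Set.mem_inv, mul_inv_rev, inv_inv]
      exact h1
    have haeh : ∀ᵐ h ∂μ, ¬ (h ∈ T ∧ ¬ (ξ : G → H) (h⁻¹ * g) = ind (h⁻¹ * g)) :=
      measure_eq_zero_iff_ae_notMem.1 hBnull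
    calc ∫ h, f h • (U h : H →L[ℂ] H) ((ξ : G → H) (h⁻¹ * g)) ∂μ
        = ∫ h, f h • (U h : H →L[ℂ] H) (ind (h⁻¹ * g)) ∂μ := by
          refine integral_congr_ae ?_
          filter_upwards [haeh] with h hh
          by_cases hhT : h ∈ T
          · have heq : (ξ : G → H) (h⁻¹ * g) = ind (h⁻¹ * g) := by
              by_contra hd
              exact hh ⟨hhT, hd⟩
            rw [heq]
          · have hf0 : f h = 0 := image_eq_zero_of_notMem_tsupport hhT
            simp [hf0]
      _ = ∫ g', f g' • (U g' : H →L[ℂ] H) ξ₀ ∂μ := by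
          refine integral_congr_ae (Filter.Eventually.of_forall fun h => ?_)
          by_cases hf0 : f h = 0
          · simp [hf0]
          · have hhS : h ∈ S := by
              rw [hS]
              exact Or.inl (subset_tsupport f hf0)
            have hmem : h⁻¹ * g ∈ E := by
              have := Set.smul_mem_smul (Set.inv_mem_inv.2 hhS) hgK
              simpa [smul_eq_mul, hE] using this
            rw [hind]
            simp only [Set.indicator_of_mem hmem]
  refine ⟨part1, part2, ?_⟩
  -- Part (iii)
  set c := π a (∫ g', f g' • (U g' : H →L[ℂ] H) ξ₀ ∂μ) with hc
  have hWm : StronglyMeasurable ((W ξ : Lp H 2 μ) : G → H) := Lp.stronglyMeasurable _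
  have hDm : MeasurableSet {x | ((W ξ : Lp H 2 μ) : G → H) x = c} := by
    have hnorm : Measurable fun x => ‖((W ξ : Lp H 2 μ) : G → H) x - c‖ :=
      (hWm.sub stronglyMeasurable_const).norm.measurable
    have hset : {x | ((W ξ : Lp H 2 μ) : G → H) x = c}
        = (fun x => ‖((W ξ : Lp H 2 μ) : G → H) x - c‖) ⁻¹' {0} := by
      ext x; simp [sub_eq_zero]
    rw [hset]
    exact hnorm (measurableSet_singleton 0)
  set B := toMeasurable μ K ∩ {x | ((W ξ : Lp H 2 μ) : G → H) x = c} with hB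
  have hBmeas : MeasurableSet B := (measurableSet_toMeasurable μ K).inter hDm
  have hBfin : μ B < ∞ :=
    lt_of_le_of_lt (le_trans (measure_mono Set.inter_subset_left)
      (measure_toMeasurable K).le) hKfin
  have hKB : μ K ≤ μ B := by
    have hnull : μ {x | ¬ (x ∈ K → ((W ξ : Lp H 2 μ) : G → H) x = c)} = 0 := part2
    calc μ K ≤ μ (B ∪ {x | ¬ (x ∈ K → ((W ξ : Lp H 2 μ) : G → H) x = c)}) := by
          refine measure_mono fun x hx => ?_
          by_cases hcx : ((W ξ : Lp H 2 μ) : G → H) x = c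
          · exact Or.inl ⟨subset_toMeasurable μ K hx, hcx⟩
          · exact Or.inr fun himp => hcx (himp hx)
      _ ≤ μ B + μ {x | ¬ (x ∈ K → ((W ξ : Lp H 2 μ) : G → H) x = c)} := measure_union_le _ _
      _ = μ B := by rw [hnull, add_zero]
  have hmono : eLpNorm (B.indicator fun _ => c) 2 μ
      ≤ eLpNorm ((W ξ : Lp H 2 μ) : G → H) 2 μ := by
    refine eLpNorm_mono fun x => ?_
    by_cases hx : x ∈ B
    · rw [Set.indicator_of_mem hx]
      exact le_of_eq (by rw [hx.2])
    · simp [Set.indicator_of_notMem hx]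
  rw [Lp.norm_def]
  have hBrtop : (‖c‖₊ : ℝ≥0∞) * μ B ^ (1 / 2 : ℝ) ≠ ∞ :=
    ENNReal.mul_ne_top ENNReal.coe_ne_top
      (by simp [ENNReal.rpow_eq_top_iff, hBfin.ne])
  calc Real.sqrt (μ K).toReal * ‖c‖
      = ((‖c‖₊ : ℝ≥0∞) * μ K ^ (1 / 2 : ℝ)).toReal := (toReal_norm_mul_rpow_half c (μ K)).symm
    _ ≤ ((‖c‖₊ : ℝ≥0∞) * μ B ^ (1 / 2 : ℝ)).toReal := by
        refine ENNReal.toReal_mono hBrtop ?_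
        exact mul_le_mul_right (ENNReal.rpow_le_rpow hKB (by norm_num)) _
    _ = (eLpNorm (B.indicator fun _ => c) 2 μ).toReal := by
        rw [eLpNorm_indicator_const hBmeas (by norm_num) (by norm_num)]
        norm_num
    _ ≤ (eLpNorm ((W ξ : Lp H 2 μ) : G → H) 2 μ).toReal :=
        ENNReal.toReal_mono (Lp.eLpNorm_ne_top _) hmono
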